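/- Let G be a connected {2P₃, S₁,₂,₂}-free graph with efficient dominating set D, v ∈ D, and distance levels Nᵢ from v. If v is the midpoint of an induced P₃ (i.e., v has two non-adjacent neighbors), then the induced subgraph G[V \ ({v} ∪ N₁ ∪ N₂)] is P₃-free, i.e., a disjoint union of cliques. -/

import Mathlib

open SimpleGraph

/-- `D` is an efficient dominating set. -/
def IsEffDomSet {V : Type*} (G : SimpleGraph V) (D : Set V) : Prop :=
  ∀ u : V, ∃! d : V, d ∈ D ∧ (d = u ∨ G.Adj d u)

/-- `2P₃`: the disjoint union of two chordless paths on 3 vertices. -/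
def twoP3 : SimpleGraph (Fin 6) :=
  SimpleGraph.fromEdgeSet {s(0, 1), s(1, 2), s(3, 4), s(4, 5)}

/-- `S₁,₂,₂`: a chordless path 0-1-2-3-4 plus a vertex 5 adjacent only to 2. -/
def S122 : SimpleGraph (Fin 6) :=
  SimpleGraph.fromEdgeSet {s(0, 1), s(1, 2), s(2, 3), s(3, 4), s(2, 5)}

/-!
No vertex of `R` is within distance two of `v`, so none equals or is adjacent to a vertex of
the induced path `x - v - y`. An induced `P₃` in `R` together with that path would therefore be
an induced `2P₃`.
-/

namespace SimpleGraph

variable {V W U : Type*} {G : SimpleGraph V} {H : SimpleGraph W} {K : SimpleGraph U}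

def Embedding.sumOfSeparated (f : G ↪g K) (g : H ↪g K)
    (hsep : ∀ a b, f a ≠ g b ∧ ¬ K.Adj (f a) (g b)) : G ⊕g H ↪g K where
  toFun := Sum.elim f g
  inj' := by
    rintro (a | b) (a' | b') h
    · simp_all
    · exact absurd h (hsep a b').1
    · exact absurd h.symm (hsep a' b).1
    · simp_all
  map_rel_iff' := by
    rintro (a | b) (a' | b')
    · exact f.map_adj_iff
    · exact iff_of_false (hsep a b').2 (by simp)
    · exact iff_of_false (fun h => (hsep a' b).2 h.symm) (by simp)
    · exact g.map_adj_iff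

def pathGraphThreeEmbedding {a b c : U} (hab : K.Adj a b) (hbc : K.Adj b c)
    (hac : ¬ K.Adj a c) (hne : a ≠ c) : pathGraph 3 ↪g K where
  toFun := ![a, b, c]
  inj' := by
    intro i j h
    fin_cases i <;> fin_cases j <;> simp_all [hab.ne, hbc.ne, hab.ne.symm, hbc.ne.symm, eq_comm]
  map_rel_iff' := by
    intro i j
    change K.Adj (![a, b, c] i) (![a, b, c] j) ↔ _
    fin_cases i <;> fin_cases j <;> simp_all [pathGraph_adj, K.adj_comm]

def sumIsoTwoP3 : pathGraph 3 ⊕g pathGraph 3 ≃g twoP3 where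
  toEquiv := finSumFinEquiv
  map_rel_iff' := by
    rintro (i | i) (j | j) <;> fin_cases i <;> fin_cases j <;>
      simp [twoP3, pathGraph_adj] <;> decide

/-- `G.dist v w = 0` also holds for `w` unreachable from `v`; the walk `v - u - w` rules
this out. -/
lemma ne_and_not_adj_of_dist_ne_one_of_dist_ne_two {u v w : V} (hu : u = v ∨ G.Adj v u)
    (hwv : w ≠ v) (hw1 : G.dist v w ≠ 1) (hw2 : G.dist v w ≠ 2) : u ≠ w ∧ ¬ G.Adj u w := by
  rcases hu with rfl | hvu
  · exact ⟨hwv.symm, fun h => hw1 (dist_eq_one_iff_adj.mpr h)⟩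
  refine ⟨fun huw => hw1 (dist_eq_one_iff_adj.mpr (huw ▸ hvu)), fun huw => ?_⟩
  let p : G.Walk v w := .cons hvu (.cons huw .nil)
  have hle : G.dist v w ≤ 2 := dist_le p
  have hpos : 0 < G.dist v w := p.reachable.pos_dist_of_ne hwv.symm
  omega

end SimpleGraph

theorem stmt15_general {V : Type*} (G : SimpleGraph V)
    (h2P3free : IsEmpty (twoP3 ↪g G))
    (v : V)
    -- v is the midpoint of an induced P₃: it has two non-adjacent neighbors
    (x y : V) (hvx : G.Adj v x) (hvy : G.Adj v y) (hxy : ¬ G.Adj x y) (hne : x ≠ y)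
    (R : Set V) (hR : R = Set.univ \ ({v} ∪ {w | G.dist v w = 1} ∪ {w | G.dist v w = 2})) :
    IsEmpty (SimpleGraph.pathGraph 3 ↪g G.induce R) := by
  subst hR
  refine ⟨fun f => h2P3free.false ?_⟩
  let xvy := pathGraphThreeEmbedding hvx.symm hvy hxy hne
  have hxvy : ∀ i, xvy i = v ∨ G.Adj v (xvy i) := by
    intro i
    change ![x, v, y] i = v ∨ G.Adj v (![x, v, y] i)
    fin_cases i
    exacts [.inr hvx, .inl rfl, .inr hvy]
  refine (xvy.sumOfSeparated ((Embedding.induce _).comp f) fun i j => ?_).comp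
    sumIsoTwoP3.symm.toEmbedding
  have hfar := (f j).2
  simp only [Set.mem_sdiff, Set.mem_univ, Set.mem_union, Set.mem_singleton_iff,
    Set.mem_ofPred_eq, not_or, true_and] at hfar
  exact ne_and_not_adj_of_dist_ne_one_of_dist_ne_two (hxvy i) hfar.1.1 hfar.1.2 hfar.2

theorem stmt15 {V : Type*} [Fintype V] (G : SimpleGraph V) (hG : G.Connected)
    (h2P3free : IsEmpty (twoP3 ↪g G))
    (hSfree : IsEmpty (S122 ↪g G))
    (D : Set V) (hD : IsEffDomSet G D) (v : V) (hv : v ∈ D)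
    -- v is the midpoint of an induced P₃: it has two non-adjacent neighbors
    (x y : V) (hvx : G.Adj v x) (hvy : G.Adj v y) (hxy : ¬ G.Adj x y) (hne : x ≠ y)
    (R : Set V) (hR : R = Set.univ \ ({v} ∪ {w | G.dist v w = 1} ∪ {w | G.dist v w = 2})) :
    IsEmpty (SimpleGraph.pathGraph 3 ↪g G.induce R) :=
  stmt15_general G h2P3free v x y hvx hvy hxy hne R hR
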